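/- arXiv:1909.13608 — 4 statements merged into one kernel-verified Lean document; each statement's English description precedes it below -/
import Mathlib

section
/- Let E ⊆ ℝ be an open interval, let F : ℝⁿ → ℝⁿ be differentiable, let φ : E → ℝⁿ be differentiable, and let j ∈ {1,…,n} be an index such that F_ℓ(φ(z)) = 0 for every z ∈ E and every ℓ ≠ j. Then for every z ∈ E and every index i with φ_i'(z) ≠ 0, one has det(J_F(φ(z))) = ((−1)^{i+j}/φ_i'(z)) · (F_j ∘ φ)'(z) · det(J_F(φ(z))_{J,I}), where J = {1,…,n}∖{j}, I = {1,…,n}∖{i}. -/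
/-- If `F : ℝⁿ → ℝⁿ` and `φ : E → ℝⁿ` are differentiable on the open
interval `E = (a, b)` and all components of `F ∘ φ` vanish on `E` except possibly
the `j`-th one, then for every `z ∈ E` and every index `i` with `φᵢ'(z) ≠ 0`,
`det J_F(φ(z)) = ((-1)^(i+j) / φᵢ'(z)) * (F_j ∘ φ)'(z) * det (J_F(φ(z))_{J,I})`,
where `J = {1,…,n} \ {j}` and `I = {1,…,n} \ {i}`. -/
theorem stmt3 {n : ℕ} (a b : ℝ)
    (F : (Fin (n + 1) → ℝ) → (Fin (n + 1) → ℝ)) (hF : Differentiable ℝ F)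
    (φ : ℝ → (Fin (n + 1) → ℝ))
    (hφ : ∀ z ∈ Set.Ioo a b, DifferentiableAt ℝ φ z)
    (j : Fin (n + 1))
    (hzero : ∀ z ∈ Set.Ioo a b, ∀ ℓ : Fin (n + 1), ℓ ≠ j → F (φ z) ℓ = 0) :
    ∀ z ∈ Set.Ioo a b, ∀ i : Fin (n + 1), deriv (fun t => φ t i) z ≠ 0 →
      (Matrix.of fun r c : Fin (n + 1) => fderiv ℝ F (φ z) (Pi.single c 1) r).det
        = ((-1) ^ ((i : ℕ) + (j : ℕ)) / deriv (fun t => φ t i) z)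
            * deriv (fun t => F (φ t) j) z
            * ((Matrix.of fun r c : Fin (n + 1) =>
                  fderiv ℝ F (φ z) (Pi.single c 1) r).submatrix
                j.succAbove i.succAbove).det := by
  intro z hz i hi
  set A : Matrix (Fin (n + 1)) (Fin (n + 1)) ℝ :=
    Matrix.of fun r c : Fin (n + 1) => fderiv ℝ F (φ z) (Pi.single c 1) r with hA
  have hφz := hφ z hz
  have hder : HasDerivAt φ (deriv φ z) z := hφz.hasDerivAt
  set w : Fin (n + 1) → ℝ := deriv φ z with hw
  -- component derivatives
  have hcomp : ∀ k : Fin (n + 1), deriv (fun t => φ t k) z = w k := by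
    intro k
    have : HasDerivAt (fun t => φ t k) (w k) z :=
      (ContinuousLinearMap.proj (R := ℝ) (φ := fun _ : Fin (n+1) => ℝ)
        k).hasFDerivAt.comp_hasDerivAt z hder
    exact this.deriv
  -- chain rule for components of F ∘ φ
  have hchain : ∀ ℓ : Fin (n + 1),
      HasDerivAt (fun t => F (φ t) ℓ) ((fderiv ℝ F (φ z)) w ℓ) z := by
    intro ℓ
    have h1 : HasFDerivAt (fun x => F x ℓ)
        ((ContinuousLinearMap.proj (R := ℝ) (φ := fun _ : Fin (n+1) => ℝ)
          ℓ).comp (fderiv ℝ F (φ z))) (φ z) :=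
      (ContinuousLinearMap.proj (R := ℝ) (φ := fun _ : Fin (n+1) => ℝ)
          ℓ).hasFDerivAt.comp (φ z) (hF (φ z)).hasFDerivAt
    exact h1.comp_hasDerivAt z hder
  -- A *ᵥ w = fderiv ℝ F (φ z) w
  have hAw : A.mulVec w = fderiv ℝ F (φ z) w := by
    ext k
    have hsum : w = ∑ c : Fin (n + 1), w c • (Pi.single c 1 : Fin (n + 1) → ℝ) := by
      ext c; simp [Pi.single_apply, Finset.sum_apply, eq_comm]
    conv_rhs => rw [hsum]
    simp only [map_sum, map_smul]
    simp [Matrix.mulVec, dotProduct, hA, mul_comm, Finset.sum_apply]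
  -- the vector A *ᵥ w is a single
  set c : ℝ := deriv (fun t => F (φ t) j) z with hc
  have hsingle : A.mulVec w = Pi.single j c := by
    ext ℓ
    rcases eq_or_ne ℓ j with rfl | hne
    · rw [hAw, Pi.single_eq_same, hc, (hchain ℓ).deriv]
    · rw [hAw, Pi.single_eq_of_ne hne]
      have hzero' : deriv (fun t => F (φ t) ℓ) z = 0 := by
        have hev : (fun t => F (φ t) ℓ) =ᶠ[nhds z] fun _ => (0 : ℝ) := by
          filter_upwards [isOpen_Ioo.mem_nhds hz] with t ht
          exact hzero t ht ℓ hne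
        rw [hev.deriv_eq, deriv_const]
      rw [← hzero', (hchain ℓ).deriv]
  -- adjugate trick
  have hkey : A.det * w i = A.adjugate i j * c := by
    have := congrFun (congrArg (A.adjugate.mulVec) hsingle) i
    rw [Matrix.mulVec_mulVec, Matrix.adjugate_mul, Matrix.smul_mulVec,
      Matrix.one_mulVec, Matrix.mulVec_single] at this
    simpa using this
  have hadj : A.adjugate i j
      = (-1) ^ ((j : ℕ) + (i : ℕ)) * (A.submatrix j.succAbove i.succAbove).det :=
    Matrix.adjugate_fin_succ_eq_det_submatrix A i j
  rw [hcomp i] at hi ⊢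
  rw [hadj, add_comm (j : ℕ) (i : ℕ)] at hkey
  field_simp at hkey ⊢
  linarith [hkey]
end

section
/- Let A be a real n×n matrix, v ∈ ℝⁿ, c ∈ ℝ, and let i, j ∈ {1,…,n} be indices with v_i ≠ 0. If A·v = c·e_j, where e_j is the j-th standard basis vector of ℝⁿ, then det(A) = ((−1)^{i+j}·c/v_i) · det(A_{J,I}), where J = {1,…,n}∖{j} and I = {1,…,n}∖{i}. -/
/-! Multiplying `A v = c e_j` on the left by the adjugate gives `det A • v = c • adj(A) e_j`; reading
off the `i`-th coordinate, `det A · v_i = c · adj(A)_{ij}`, and `adj(A)_{ij}` is the signed minor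
`(-1)^(i+j) det A_{J,I}`. -/

namespace Matrix

theorem det_mul_apply_eq_mul_adjugate_of_mulVec_eq {R ι : Type*} [CommRing R] [Fintype ι]
    [DecidableEq ι] (A : Matrix ι ι R) {v : ι → R} {c : R} {j : ι}
    (hA : A *ᵥ v = c • Pi.single j 1) (i : ι) :
    A.det * v i = c * A.adjugate i j := by
  have hadj : A.det • v = A.adjugate *ᵥ (A *ᵥ v) := by
    rw [mulVec_mulVec, adjugate_mul, smul_mulVec, one_mulVec]
  have := congrFun hadj i
  rw [hA, mulVec_smul, mulVec_single_one] at this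
  simpa using this

theorem det_mul_apply_eq_mul_det_submatrix_of_mulVec_eq {R : Type*} [CommRing R] {n : ℕ}
    (A : Matrix (Fin (n + 1)) (Fin (n + 1)) R) {v : Fin (n + 1) → R} {c : R} {j : Fin (n + 1)}
    (hA : A *ᵥ v = c • Pi.single j 1) (i : Fin (n + 1)) :
    A.det * v i = (-1) ^ ((i : ℕ) + (j : ℕ)) * c * (A.submatrix j.succAbove i.succAbove).det := by
  rw [det_mul_apply_eq_mul_adjugate_of_mulVec_eq A hA i, adjugate_fin_succ_eq_det_submatrix]
  ring

end Matrix

/-- If `A·v = c·e_j` and `v_i ≠ 0`, then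
`det A = ((-1)^(i+j) * c / v_i) * det (A_{J,I})` with `J = {1,…,n} \ {j}`,
`I = {1,…,n} \ {i}`. -/
theorem stmt4 {n : ℕ} (A : Matrix (Fin (n + 1)) (Fin (n + 1)) ℝ)
    (v : Fin (n + 1) → ℝ) (c : ℝ) (i j : Fin (n + 1)) (hv : v i ≠ 0)
    (hA : A.mulVec v = c • (Pi.single j 1 : Fin (n + 1) → ℝ)) :
    A.det = ((-1) ^ ((i : ℕ) + (j : ℕ)) * c / v i)
      * (A.submatrix j.succAbove i.succAbove).det := by
  rw [div_mul_eq_mul_div, eq_div_iff hv]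
  exact A.det_mul_apply_eq_mul_det_submatrix_of_mulVec_eq hA i
end

section
/- Let E ⊆ ℝ be an open interval, let F : ℝⁿ → ℝⁿ be differentiable, let φ : E → ℝⁿ be differentiable, and let i, j ∈ {1,…,n} be indices such that F_ℓ(φ(z)) = 0 for every z ∈ E and every ℓ ≠ j, and φ_i'(z) ≠ 0 for every z ∈ E. Set I = {1,…,n}∖{i} and J = {1,…,n}∖{j}, and assume there is ε ∈ {+1,−1} such that (1/φ_i'(z))·det(J_F(φ(z))_{J,I}) has sign ε for every z ∈ E. Let z1 < z2 < … < zℓ be exactly the zeros of F_j ∘ φ in E, and assume (F_j ∘ φ)'(z_k) ≠ 0 for every k. Then the signs of det(J_F(φ(z_k))) alternate in k; specifically, for every k, sign(det(J_F(φ(z_k)))) = (−1)^{k−1} · (−1)^{i+j} · ε · sign((F_j ∘ φ)'(z_1)). -/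
open Set Filter Topology

lemma sign_mul' (x y : ℝ) : Real.sign (x * y) = Real.sign x * Real.sign y := by
  rcases lt_trichotomy x 0 with hx | rfl | hx
  · rcases lt_trichotomy y 0 with hy | rfl | hy
    · rw [Real.sign_of_pos (mul_pos_of_neg_of_neg hx hy), Real.sign_of_neg hx,
        Real.sign_of_neg hy]; ring
    · simp
    · rw [Real.sign_of_neg (mul_neg_of_neg_of_pos hx hy), Real.sign_of_neg hx,
        Real.sign_of_pos hy]; ring
  · simp
  · rcases lt_trichotomy y 0 with hy | rfl | hy
    · rw [Real.sign_of_neg (mul_neg_of_pos_of_neg hx hy), Real.sign_of_pos hx,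
        Real.sign_of_neg hy]; ring
    · simp
    · rw [Real.sign_of_pos (mul_pos hx hy), Real.sign_of_pos hx, Real.sign_of_pos hy]; ring

lemma sign_neg_one_pow_mul (m : ℕ) (x : ℝ) :
    Real.sign ((-1:ℝ)^m * x) = (-1:ℝ)^m * Real.sign x := by
  rcases neg_one_pow_eq_or ℝ m with h | h <;> rw [h] <;> simp [Real.sign_neg]

lemma endpoint_derivs {g : ℝ → ℝ} {u v du dv : ℝ} (huv : u < v)
    (hgu : HasDerivAt g du u) (hgv : HasDerivAt g dv v)
    (h0u : g u = 0) (h0v : g v = 0)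
    (hpos : ∀ x ∈ Set.Ioo u v, 0 < g x) : 0 ≤ du ∧ dv ≤ 0 := by
  constructor
  · have h1 : Tendsto (slope g u) (𝓝[>] u) (𝓝 du) :=
      (hasDerivAt_iff_tendsto_slope.mp hgu).mono_left
        (nhdsWithin_mono _ fun x hx => ne_of_gt hx)
    refine ge_of_tendsto h1 ?_
    filter_upwards [Ioo_mem_nhdsGT_of_mem (⟨le_refl u, huv⟩ : u ∈ Set.Ico u v)] with x hx
    rw [slope_def_field, h0u, sub_zero]
    exact div_nonneg (hpos x hx).le (by linarith [hx.1])
  · have h1 : Tendsto (slope g v) (𝓝[<] v) (𝓝 dv) :=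
      (hasDerivAt_iff_tendsto_slope.mp hgv).mono_left
        (nhdsWithin_mono _ fun x hx => ne_of_lt hx)
    refine le_of_tendsto h1 ?_
    filter_upwards [Ioo_mem_nhdsLT_of_mem (⟨huv, le_refl v⟩ : v ∈ Set.Ioc u v)] with x hx
    rw [slope_def_field, h0v, sub_zero]
    exact div_nonpos_of_nonneg_of_nonpos (hpos x hx).le (by linarith [hx.2])

lemma const_sign {g : ℝ → ℝ} {u v : ℝ} (huv : u < v)
    (hc : ContinuousOn g (Set.Ioo u v))
    (hne : ∀ x ∈ Set.Ioo u v, g x ≠ 0) :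
    (∀ x ∈ Set.Ioo u v, 0 < g x) ∨ (∀ x ∈ Set.Ioo u v, g x < 0) := by
  have hm : (u+v)/2 ∈ Set.Ioo u v := ⟨by linarith, by linarith⟩
  have key : ∀ x ∈ Set.Ioo u v, ∀ y ∈ Set.Ioo u v, g x < 0 → 0 < g y → False := by
    intro x hx y hy hgx hgy
    have hsub : Set.uIcc x y ⊆ Set.Ioo u v := Set.ordConnected_Ioo.uIcc_subset hx hy
    obtain ⟨c, hc1, hc2⟩ := intermediate_value_uIcc (hc.mono hsub)
      (Set.mem_uIcc.mpr (Or.inl ⟨hgx.le, hgy.le⟩))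
    exact hne c (hsub hc1) hc2
  rcases (hne _ hm).lt_or_gt with h | h
  · right; intro y hy
    rcases (hne y hy).lt_or_gt with h' | h'
    · exact h'
    · exact (key _ hm _ hy h h').elim
  · left; intro y hy
    rcases (hne y hy).lt_or_gt with h' | h'
    · exact (key _ hy _ hm h' h).elim
    · exact h'

lemma key_det {n : ℕ} (a b : ℝ) (F : (Fin (n+1) → ℝ) → (Fin (n+1) → ℝ))
    (hF : Differentiable ℝ F) (φ : ℝ → (Fin (n+1) → ℝ))
    (hφ : ∀ z ∈ Set.Ioo a b, DifferentiableAt ℝ φ z)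
    (i j : Fin (n+1))
    (hzero : ∀ z ∈ Set.Ioo a b, ∀ l : Fin (n+1), l ≠ j → F (φ z) l = 0)
    (x : ℝ) (hx : x ∈ Set.Ioo a b)
    (hd0 : deriv (fun t => φ t i) x ≠ 0) :
    ((Matrix.of fun r c : Fin (n+1) => fderiv ℝ F (φ x) (Pi.single c 1) r).det)
      = (-1:ℝ)^((i:ℕ)+(j:ℕ)) * (deriv (fun t => F (φ t) j) x *
        ((1 / deriv (fun t => φ t i) x) *
          ((Matrix.of fun r c : Fin (n+1) => fderiv ℝ F (φ x) (Pi.single c 1) r).submatrix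
            j.succAbove i.succAbove).det)) := by
  set A := (Matrix.of fun r c : Fin (n+1) => fderiv ℝ F (φ x) (Pi.single c 1) r) with hA
  have hder : HasDerivAt φ (deriv φ x) x := (hφ x hx).hasDerivAt
  have hcomp : HasDerivAt (fun t => F (φ t)) (fderiv ℝ F (φ x) (deriv φ x)) x :=
    ((hF (φ x)).hasFDerivAt).comp_hasDerivAt x hder
  have hcompl : ∀ l, HasDerivAt (fun t => F (φ t) l) (fderiv ℝ F (φ x) (deriv φ x) l) x :=
    hasDerivAt_pi.mp hcomp
  have hz : ∀ l, l ≠ j → fderiv ℝ F (φ x) (deriv φ x) l = 0 := by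
    intro l hl
    have hev : (fun t => F (φ t) l) =ᶠ[𝓝 x] fun _ => (0:ℝ) := by
      filter_upwards [Ioo_mem_nhds hx.1 hx.2] with t ht
      exact hzero t ht l hl
    have h0 : HasDerivAt (fun t => F (φ t) l) 0 x :=
      (hasDerivAt_const x (0:ℝ)).congr_of_eventuallyEq hev
    exact (hcompl l).unique h0
  have hsingle : fderiv ℝ F (φ x) (deriv φ x)
      = Pi.single j (deriv (fun t => F (φ t) j) x) := by
    funext l
    by_cases hl : l = j
    · subst hl; rw [(hcompl l).deriv]; simp
    · rw [hz l hl, Pi.single_eq_of_ne hl]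
  have hvi : deriv (fun t => φ t i) x = deriv φ x i := (hasDerivAt_pi.mp hder i).deriv
  have hmv : A.mulVec (deriv φ x) = fderiv ℝ F (φ x) (deriv φ x) := by
    funext r
    have hv : deriv φ x = ∑ c : Fin (n+1),
        deriv φ x c • (Pi.single c (1:ℝ) : Fin (n+1) → ℝ) := by
      funext l
      simp [Pi.single_apply, Finset.sum_apply]
    conv_rhs => rw [hv, map_sum]
    simp [hA, Matrix.mulVec, dotProduct, Finset.sum_apply, mul_comm]
  have hcram : A.det • (deriv φ x) = Matrix.cramer A (A.mulVec (deriv φ x)) := by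
    rw [Matrix.cramer_eq_adjugate_mulVec, Matrix.mulVec_mulVec, Matrix.adjugate_mul,
      Matrix.smul_mulVec, Matrix.one_mulVec]
  have hps : (Pi.single j (deriv (fun t => F (φ t) j) x) : Fin (n+1) → ℝ)
      = (deriv (fun t => F (φ t) j) x) • (Pi.single j (1:ℝ) : Fin (n+1) → ℝ) := by
    funext l
    by_cases hl : l = j
    · subst hl; simp
    · simp [Pi.single_eq_of_ne hl]
  have h5 : A.det * deriv φ x i
      = deriv (fun t => F (φ t) j) x * (A.updateCol i (Pi.single j 1)).det := by
    have h6 := congrFun hcram i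
    rw [hmv, hsingle, hps, map_smul] at h6
    simpa [Matrix.cramer_apply] using h6
  have hexp : (A.updateCol i (Pi.single j (1:ℝ))).det
      = (-1:ℝ)^((j:ℕ)+(i:ℕ)) * (A.submatrix j.succAbove i.succAbove).det := by
    rw [Matrix.det_succ_column _ i, Finset.sum_eq_single j]
    · have hsub : (A.updateCol i (Pi.single j (1:ℝ))).submatrix j.succAbove i.succAbove
          = A.submatrix j.succAbove i.succAbove := by
        ext r c
        simp [Matrix.submatrix_apply, Matrix.updateCol_ne (Fin.succAbove_ne i c)]
      rw [hsub, Matrix.updateCol_self]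
      simp
    · intro r _ hr
      simp [Matrix.updateCol_self, Pi.single_eq_of_ne hr]
    · simp
  rw [← hvi] at h5
  have h7 : A.det * deriv (fun t => φ t i) x
      = deriv (fun t => F (φ t) j) x
        * ((-1:ℝ)^((j:ℕ)+(i:ℕ)) * (A.submatrix j.succAbove i.succAbove).det) := by
    rw [h5, hexp]
  have h8 : A.det = (A.det * deriv (fun t => φ t i) x) / deriv (fun t => φ t i) x := by
    field_simp
  rw [h8, h7, add_comm (j:ℕ) (i:ℕ)]
  field_simp

/-- Under the hypotheses of the paper's main theorem — `F`, `φ`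
differentiable, all components of `F ∘ φ` except the `j`-th vanish on the open
interval `E = (a, b)`, `φᵢ' ≠ 0` on `E`, and
`(1/φᵢ'(z)) * det (J_F(φ(z))_{J,I})` has constant sign `ε ∈ {±1}` on `E` — if
`z 0 < z 1 < …` are exactly the zeros of `F_j ∘ φ` in `E`, all simple, then
`sign (det J_F(φ(z k))) = (-1)^k * (-1)^(i+j) * ε * sign ((F_j ∘ φ)'(z 0))`
(0-indexed `k`, matching the paper's `(-1)^(k-1)` for 1-indexed `k`). -/
theorem stmt9 {n : ℕ} (a b : ℝ)
    (F : (Fin (n + 1) → ℝ) → (Fin (n + 1) → ℝ)) (hF : Differentiable ℝ F)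
    (φ : ℝ → (Fin (n + 1) → ℝ))
    (hφ : ∀ z ∈ Set.Ioo a b, DifferentiableAt ℝ φ z)
    (i j : Fin (n + 1))
    (hzero : ∀ z ∈ Set.Ioo a b, ∀ ℓ : Fin (n + 1), ℓ ≠ j → F (φ z) ℓ = 0)
    (hφi : ∀ z ∈ Set.Ioo a b, deriv (fun t => φ t i) z ≠ 0)
    (ε : ℝ) (hε : ε = 1 ∨ ε = -1)
    (hsign : ∀ z ∈ Set.Ioo a b,
      Real.sign ((1 / deriv (fun t => φ t i) z) *
        ((Matrix.of fun r c : Fin (n + 1) =>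
            fderiv ℝ F (φ z) (Pi.single c 1) r).submatrix
          j.succAbove i.succAbove).det) = ε)
    (ℓ : ℕ) (z : Fin ℓ → ℝ) (hmono : StrictMono z)
    (hmem : ∀ k, z k ∈ Set.Ioo a b)
    (hzeros : ∀ x ∈ Set.Ioo a b, F (φ x) j = 0 ↔ ∃ k, x = z k)
    (hd : ∀ k, deriv (fun t => F (φ t) j) (z k) ≠ 0) :
    ∀ k : Fin ℓ,
      Real.sign ((Matrix.of fun r c : Fin (n + 1) =>
          fderiv ℝ F (φ (z k)) (Pi.single c 1) r).det)
        = (-1) ^ (k : ℕ) * (-1) ^ ((i : ℕ) + (j : ℕ)) * ε *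
            Real.sign (deriv (fun t => F (φ t) j) (z ⟨0, k.pos⟩)) := by
  have gdiff : ∀ x ∈ Set.Ioo a b, DifferentiableAt ℝ (fun t => F (φ t) j) x := by
    intro x hx
    exact differentiableAt_pi.mp ((hF (φ x)).comp x (hφ x hx)) j
  -- sign of the determinant at any point in terms of the derivative of `F_j ∘ φ`
  have key : ∀ x ∈ Set.Ioo a b,
      Real.sign ((Matrix.of fun r c : Fin (n + 1) =>
          fderiv ℝ F (φ x) (Pi.single c 1) r).det)
        = (-1:ℝ) ^ ((i : ℕ) + (j : ℕ)) * ε *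
            Real.sign (deriv (fun t => F (φ t) j) x) := by
    intro x hx
    rw [key_det a b F hF φ hφ i j hzero x hx (hφi x hx), sign_neg_one_pow_mul, sign_mul',
      hsign x hx]
    ring
  -- alternation of the derivative signs at consecutive zeros
  have step : ∀ (k : ℕ) (hk : k + 1 < ℓ),
      Real.sign (deriv (fun t => F (φ t) j) (z ⟨k+1, hk⟩))
        = - Real.sign (deriv (fun t => F (φ t) j) (z ⟨k, Nat.lt_of_succ_lt hk⟩)) := by
    intro k hk
    have hkk : (⟨k, Nat.lt_of_succ_lt hk⟩ : Fin ℓ) < ⟨k+1, hk⟩ := by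
      simp [Fin.lt_def]
    have huv : z ⟨k, Nat.lt_of_succ_lt hk⟩ < z ⟨k+1, hk⟩ := hmono hkk
    set u := z ⟨k, Nat.lt_of_succ_lt hk⟩ with hu_def
    set v := z ⟨k+1, hk⟩ with hv_def
    have hu := hmem ⟨k, Nat.lt_of_succ_lt hk⟩
    have hv := hmem ⟨k+1, hk⟩
    have hsub : Set.Ioo u v ⊆ Set.Ioo a b := fun t ht => ⟨hu.1.trans ht.1, ht.2.trans hv.2⟩
    have hne : ∀ x ∈ Set.Ioo u v, F (φ x) j ≠ 0 := by
      intro x hx h0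
      obtain ⟨m, rfl⟩ := (hzeros x (hsub hx)).mp h0
      have h1 := hmono.lt_iff_lt.mp hx.1
      have h2 := hmono.lt_iff_lt.mp hx.2
      simp only [Fin.lt_def, Fin.val_mk] at h1 h2
      omega
    have hcont : ContinuousOn (fun t => F (φ t) j) (Set.Ioo u v) :=
      fun x hx => ((gdiff x (hsub hx)).continuousAt).continuousWithinAt
    have hgu : HasDerivAt (fun t => F (φ t) j) (deriv (fun t => F (φ t) j) u) u :=
      (gdiff u hu).hasDerivAt
    have hgv : HasDerivAt (fun t => F (φ t) j) (deriv (fun t => F (φ t) j) v) v :=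
      (gdiff v hv).hasDerivAt
    have h0u : F (φ u) j = 0 := (hzeros u hu).mpr ⟨_, rfl⟩
    have h0v : F (φ v) j = 0 := (hzeros v hv).mpr ⟨_, rfl⟩
    have hdu : deriv (fun t => F (φ t) j) u ≠ 0 := hd _
    have hdv : deriv (fun t => F (φ t) j) v ≠ 0 := hd _
    rcases const_sign huv hcont hne with hpos | hneg
    · obtain ⟨h1, h2⟩ := endpoint_derivs huv hgu hgv h0u h0v hpos
      rw [Real.sign_of_pos (lt_of_le_of_ne h1 (Ne.symm hdu)),
        Real.sign_of_neg (lt_of_le_of_ne h2 hdv)]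
    · have hpos' : ∀ x ∈ Set.Ioo u v, 0 < -(F (φ x) j) :=
        fun x hx => neg_pos.mpr (hneg x hx)
      obtain ⟨h1, h2⟩ := endpoint_derivs huv hgu.neg hgv.neg
        (by simp [h0u]) (by simp [h0v]) hpos'
      rw [Real.sign_of_neg (lt_of_le_of_ne (by linarith) hdu),
        Real.sign_of_pos (lt_of_le_of_ne (by linarith) (Ne.symm hdv))]
      ring
  -- alternation from the first zero
  have alt : ∀ (k : ℕ) (hk : k < ℓ),
      Real.sign (deriv (fun t => F (φ t) j) (z ⟨k, hk⟩))
        = (-1:ℝ)^k *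
          Real.sign (deriv (fun t => F (φ t) j) (z ⟨0, Nat.pos_of_ne_zero (by omega)⟩)) := by
    intro k
    induction k with
    | zero => intro hk; simp
    | succ m ih =>
      intro hk
      rw [step m hk, ih (Nat.lt_of_succ_lt hk)]
      ring
  intro k
  rw [key (z k) (hmem k)]
  have hk0 : (⟨(k:ℕ), k.isLt⟩ : Fin ℓ) = k := Fin.eta k k.isLt
  have := alt (k : ℕ) k.isLt
  rw [hk0] at this
  rw [this]
  ring
end

section
/- For all positive real numbers κ1, κ2, κ3, x2, x3, every complex eigenvalue of the 2×2 matrix Q = [[−κ1 − κ2·x3, −κ2·x2], [−κ2·x3, −κ2·x2 − κ3]] (regarded as a matrix over ℂ) has strictly negative real part. Equivalently, every complex root λ of the characteristic polynomial λ² + (κ2·x2 + κ2·x3 + κ1 + κ3)·λ + (κ1·κ2·x2 + κ2·κ3·x3 + κ1·κ3) satisfies Re(λ) < 0. -/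
/-- Routh–Hurwitz for a monic quadratic: if `b, c > 0`, every complex root of
`λ² + bλ + c` has negative real part. -/
lemma quadRH (b c : ℝ) (hb : 0 < b) (hc : 0 < c) (lam : ℂ)
    (h : lam ^ 2 + (b : ℂ) * lam + (c : ℂ) = 0) : lam.re < 0 := by
  by_contra hp
  push_neg at hp
  have hre := congrArg Complex.re h
  have him := congrArg Complex.im h
  simp [pow_two, Complex.mul_re, Complex.mul_im] at hre him
  have hq : lam.im = 0 := by
    rcases mul_eq_zero.mp (show lam.im * (2 * lam.re + b) = 0 by ring_nf; linarith [him]) with h' | h'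
    · exact h'
    · nlinarith
  rw [hq] at hre
  nlinarith

/-- For all positive `κ1, κ2, κ3, x2, x3`, every complex eigenvalue
(spectral value) of the matrix
`Q = [[-κ1 - κ2·x3, -κ2·x2], [-κ2·x3, -κ2·x2 - κ3]]` (viewed over `ℂ`) has
strictly negative real part; equivalently, every complex root of
`λ² + (κ2·x2 + κ2·x3 + κ1 + κ3)·λ + (κ1·κ2·x2 + κ2·κ3·x3 + κ1·κ3)` has
strictly negative real part. -/
theorem stmt12 (κ1 κ2 κ3 x2 x3 : ℝ)
    (h1 : 0 < κ1) (h2 : 0 < κ2) (h3 : 0 < κ3) (hx2 : 0 < x2) (hx3 : 0 < x3) :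
    (∀ μ ∈ spectrum ℂ
        ((!![-κ1 - κ2 * x3, -κ2 * x2; -κ2 * x3, -κ2 * x2 - κ3]).map
          (algebraMap ℝ ℂ)),
      μ.re < 0) ∧
    (∀ lam : ℂ,
      lam ^ 2 + ((κ2 * x2 + κ2 * x3 + κ1 + κ3 : ℝ) : ℂ) * lam
          + ((κ1 * κ2 * x2 + κ2 * κ3 * x3 + κ1 * κ3 : ℝ) : ℂ) = 0 →
        lam.re < 0) := by
  have hb : 0 < κ2 * x2 + κ2 * x3 + κ1 + κ3 := by positivity
  have hc : 0 < κ1 * κ2 * x2 + κ2 * κ3 * x3 + κ1 * κ3 := by positivity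
  have key : ∀ lam : ℂ,
      lam ^ 2 + ((κ2 * x2 + κ2 * x3 + κ1 + κ3 : ℝ) : ℂ) * lam
          + ((κ1 * κ2 * x2 + κ2 * κ3 * x3 + κ1 * κ3 : ℝ) : ℂ) = 0 →
        lam.re < 0 := fun lam h => quadRH _ _ hb hc lam h
  refine ⟨fun μ hμ => key μ ?_, key⟩
  rw [spectrum.mem_iff, Matrix.isUnit_iff_isUnit_det, isUnit_iff_ne_zero, ne_eq, not_not,
    Matrix.det_fin_two] at hμ
  simp [Matrix.algebraMap_matrix_apply, Matrix.map_apply] at hμ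
  rw [← hμ]; push_cast; ring
end
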